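/- arXiv:1806.03696 — 3 statements merged into one kernel-verified Lean document; each statement's English description precedes it below -/
import Mathlib

section
/- Almost-everywhere finiteness of curve intersections (consequence of the two-noodle formula, used in the proofs of Lemma 3.1 and Theorem 3.2): Let γ and γ' be rectifiable curves in ℝ². Then for Lebesgue-almost every pair (x, θ) ∈ ℝ² × (−π,π], the intersection γ ∩ (ρ_θ(γ') + x) is a finite set. -/
open MeasureTheory Set

noncomputable section

/-- A set `γ ⊆ ℝ²` (modelled as `ℂ`) is a rectifiable curve if it is the image of
a continuous injective map `Γ : [0,1] → ℝ²` and has finite 1-dimensional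
Hausdorff measure. -/
def IsRectifiableCurve (γ : Set ℂ) : Prop :=
  ∃ Γ : ℝ → ℂ, ContinuousOn Γ (Set.Icc 0 1) ∧ Set.InjOn Γ (Set.Icc 0 1) ∧
    Γ '' Set.Icc 0 1 = γ ∧ μH[1] γ < ⊤

/-!
Parametrize `γ` and `γ'` by arc length, as maps `g`, `g'` that are 1-Lipschitz on bounded sets
`T`, `T' ⊆ ℝ`; the arc length is finite because, for an injective parametrization, pieces of the
curve over consecutive partition intervals meet only at endpoints and each has `H¹` at least the
distance between its endpoints. Points of `γ ∩ (ρ_θ(γ') + x)` then come from the fibre over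
`(x, θ)` of `(s, t, θ) ↦ (g s - e^{iθ} g' t, θ)`, a Lipschitz map from a bounded subset of `ℝ³`
to `ℂ × ℝ ≅ ℝ³`. Such a map has almost all fibres finite: cut the domain into `N³` cubes of side
`~ 1/N`; each cube has image of measure `O(N⁻³)`, so the number of cubes whose image contains `y`
has integral `O(1)` uniformly in `N`, hence finite `liminf` almost everywhere by Fatou, whereas the
points of an infinite fibre eventually lie in distinct cubes.
-/

open Filter Topology Metric Module Bornology Complex
open scoped ENNReal NNReal

section FiniteFibers

variable {X Y : Type*} [MetricSpace X] {ι : ℕ → Type*} [∀ k, Fintype (ι k)]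
  {G : X → Y} {s : Set X} {D : ∀ k, ι k → Set X} {S : ∀ k, ι k → Set Y} {δ : ℕ → ℝ}

theorem eventually_card_le_sum_indicator (hδ : Tendsto δ atTop (𝓝 0))
    (hcover : ∀ k, s ⊆ ⋃ i, D k i) (hdiam : ∀ k i, ∀ x ∈ D k i, ∀ x' ∈ D k i, dist x x' ≤ δ k)
    (hS : ∀ k i, MapsTo G (s ∩ D k i) (S k i)) {y : Y} {t : Finset X}
    (ht : ↑t ⊆ s ∩ G ⁻¹' {y}) :
    ∀ᶠ k in atTop, (t.card : ℝ≥0∞) ≤ ∑ i, (S k i).indicator 1 y := by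
  classical
  have hsep : ∀ᶠ k in atTop, ∀ x ∈ t, ∀ x' ∈ t, x ≠ x' → δ k < dist x x' := by
    simp only [eventually_all_finset]
    intro x _ x' _
    rcases eq_or_ne x x' with rfl | hne
    · simp
    · exact (hδ.eventually (gt_mem_nhds (dist_pos.2 hne))).mono fun k hk _ => hk
  filter_upwards [hsep] with k hk
  have hcard : t.card ≤ (Finset.univ.filter fun i => y ∈ S k i).card := by
    refine Finset.card_le_card_of_forall_subsingleton (fun x i => x ∈ D k i) (fun x hx => ?_)
      (fun i _ x hx x' hx' => ?_)
    · obtain ⟨hxs, hxy⟩ := ht hx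
      obtain ⟨i, hi⟩ := mem_iUnion.1 (hcover k hxs)
      exact ⟨i, Finset.mem_filter.2 ⟨Finset.mem_univ _, hxy ▸ hS k i ⟨hxs, hi⟩⟩, hi⟩
    · by_contra hne
      exact (hk x hx.1 x' hx'.1 hne).not_ge (hdiam k i x hx.2 x' hx'.2)
  simp only [indicator_apply, Pi.one_apply]
  rw [Finset.sum_boole]
  exact_mod_cast hcard

theorem ae_finite_inter_preimage_of_cover [MeasurableSpace Y] {μ : Measure Y} {C : ℝ≥0∞}
    (hδ : Tendsto δ atTop (𝓝 0))
    (hcover : ∀ k, s ⊆ ⋃ i, D k i) (hdiam : ∀ k i, ∀ x ∈ D k i, ∀ x' ∈ D k i, dist x x' ≤ δ k)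
    (hS : ∀ k i, MapsTo G (s ∩ D k i) (S k i)) (hSmeas : ∀ k i, MeasurableSet (S k i))
    (hC : ∀ k, ∑ i, μ (S k i) ≤ C) (hCfin : C ≠ ∞) :
    ∀ᵐ y ∂μ, (s ∩ G ⁻¹' {y}).Finite := by
  set N : ℕ → Y → ℝ≥0∞ := fun k y => ∑ i, (S k i).indicator 1 y
  have hNmeas : ∀ k, Measurable (N k) := fun k =>
    Finset.measurable_sum _ fun i _ => measurable_one.indicator (hSmeas k i)
  have hNint : ∀ k, ∫⁻ y, N k y ∂μ ≤ C := fun k => by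
    rw [lintegral_finsetSum _ fun i _ => measurable_one.indicator (hSmeas k i)]
    simpa only [lintegral_indicator_one (hSmeas k _)] using hC k
  have hFatou : ∫⁻ y, liminf (fun k => N k y) atTop ∂μ ≤ C :=
    (lintegral_liminf_le hNmeas).trans (liminf_le_of_frequently_le' (.of_forall hNint))
  filter_upwards [ae_lt_top (.liminf hNmeas) (ne_top_of_le_ne_top hCfin hFatou)] with y hy
  by_contra hinf
  obtain ⟨m, hm⟩ := ENNReal.exists_nat_gt hy.ne
  obtain ⟨t, ht, rfl⟩ := Set.Infinite.exists_subset_card_eq hinf m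
  exact hm.not_ge (le_liminf_of_le (by isBoundedDefault)
    (eventually_card_le_sum_indicator hδ hcover hdiam hS ht))

end FiniteFibers

section Grid

variable {ι : Type*}

def gridCube (k : ℕ) (c : ι → Fin (k + 1)) : Set (ι → ℝ) :=
  Icc (fun i => (c i : ℝ) / (k + 1)) (fun i => ((c i : ℝ) + 1) / (k + 1))

theorem exists_fin_mem_Icc_div {a : ℝ} (ha : a ∈ Icc (0 : ℝ) 1) (k : ℕ) :
    ∃ j : Fin (k + 1), a ∈ Icc ((j : ℝ) / (k + 1)) (((j : ℝ) + 1) / (k + 1)) := by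
  have hk : (0 : ℝ) < k + 1 := by positivity
  set j := min ⌊a * (k + 1)⌋₊ k with hj
  have hlow : (j : ℝ) ≤ a * (k + 1) :=
    (Nat.cast_le.2 (min_le_left _ _)).trans (Nat.floor_le (mul_nonneg ha.1 hk.le))
  have hupp : a * (k + 1) ≤ j + 1 := by
    rcases le_total ⌊a * (k + 1)⌋₊ k with h | h
    · rw [hj, min_eq_left h]
      exact (Nat.lt_floor_add_one _).le
    · rw [hj, min_eq_right h]
      nlinarith [ha.2]
  exact ⟨⟨j, Nat.lt_succ_of_le (min_le_right _ _)⟩, (div_le_iff₀ hk).2 hlow,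
    (le_div_iff₀ hk).2 hupp⟩

theorem Icc_zero_one_subset_iUnion_gridCube (k : ℕ) :
    Icc (0 : ι → ℝ) 1 ⊆ ⋃ c, gridCube k c := fun u hu => by
  choose c hc using fun i => exists_fin_mem_Icc_div ⟨hu.1 i, hu.2 i⟩ k
  exact mem_iUnion.2 ⟨c, fun i => (hc i).1, fun i => (hc i).2⟩

theorem dist_le_of_mem_gridCube [Fintype ι] {k : ℕ} {c : ι → Fin (k + 1)} {u v : ι → ℝ}
    (hu : u ∈ gridCube k c) (hv : v ∈ gridCube k c) : dist u v ≤ 1 / (k + 1) :=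
  (dist_pi_le_iff (by positivity)).2 fun i =>
    (Real.dist_le_of_mem_Icc ⟨hu.1 i, hu.2 i⟩ ⟨hv.1 i, hv.2 i⟩).trans_eq (by ring)

end Grid

theorem pow_mul_div_pow_le {n d : ℕ} (hnd : n ≤ d) {K x : ℝ} (hK : 0 ≤ K) (hx : 1 ≤ x) :
    x ^ n * (K / x) ^ d ≤ K ^ d := by
  have hx0 : 0 < x := by linarith
  rw [div_pow, mul_div_assoc', div_le_iff₀ (by positivity), mul_comm]
  exact mul_le_mul_of_nonneg_left (pow_le_pow_right₀ hx hnd) (by positivity)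

theorem exists_lipschitzWith_subset_image_Icc {F : Type*} [NormedAddCommGroup F]
    [NormedSpace ℝ F] [FiniteDimensional ℝ F] {s : Set F} (hs : IsBounded s) :
    ∃ (ψ : (Fin (finrank ℝ F) → ℝ) → F) (L : ℝ≥0), LipschitzWith L ψ ∧ s ⊆ ψ '' Icc 0 1 := by
  let e : (Fin (finrank ℝ F) → ℝ) ≃L[ℝ] F := .ofFinrankEq (by simp)
  obtain ⟨R, hR, hsR⟩ := (e.symm.lipschitz.isBounded_image hs).subset_closedBall_lt 0 0
  refine ⟨fun u => e (R • ((2 : ℝ) • u - 1)),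
    ‖(e : (Fin (finrank ℝ F) → ℝ) →L[ℝ] F)‖₊ * (R * 2).toNNReal, ?_, fun x hx => ?_⟩
  · refine LipschitzWith.of_dist_le_mul fun u v => ?_
    rw [dist_eq_norm, ← map_sub, ← smul_sub, sub_sub_sub_cancel_right, ← smul_sub, smul_smul,
      NNReal.coe_mul, Real.coe_toNNReal _ (by positivity), mul_assoc, dist_eq_norm]
    refine ((e : (Fin (finrank ℝ F) → ℝ) →L[ℝ] F).le_opNorm _).trans ?_
    rw [norm_smul, Real.norm_of_nonneg (by positivity), coe_nnnorm]
  · have hv := mem_closedBall_zero_iff.1 (hsR (mem_image_of_mem e.symm hx))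
    have hvi : ∀ i, |e.symm x i| ≤ R := fun i => (norm_le_pi_norm _ i).trans hv
    refine ⟨fun i => (e.symm x i + R) / (2 * R), ⟨fun i => ?_, fun i => ?_⟩, ?_⟩
    · have := neg_le_of_abs_le (hvi i)
      exact div_nonneg (by linarith) (by positivity)
    · have := le_of_abs_le (hvi i)
      exact (div_le_one (by positivity)).2 (by linarith)
    · have hu : R • ((2 : ℝ) • (fun i => (e.symm x i + R) / (2 * R)) - 1) = e.symm x := by
        ext i
        simp only [Pi.smul_apply, Pi.sub_apply, Pi.one_apply, smul_eq_mul]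
        field_simp
        ring
      simp only [hu, ContinuousLinearEquiv.apply_symm_apply]

section LipschitzFibers

variable {E : Type*} [NormedAddCommGroup E] [NormedSpace ℝ E] [FiniteDimensional ℝ E]
  [MeasurableSpace E] [BorelSpace E] (μ : Measure E) [μ.IsAddHaarMeasure]

theorem measure_closure_image_le_of_lipschitzOnWith {F : Type*} [PseudoMetricSpace F]
    {G : F → E} {K : ℝ≥0} {s : Set F} (hG : LipschitzOnWith K G s) {r : ℝ}
    (hs : ∀ x ∈ s, ∀ y ∈ s, dist x y ≤ r) :
    μ (closure (G '' s)) ≤ ENNReal.ofReal ((K * r) ^ finrank ℝ E) * μ (ball 0 1) := by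
  rcases s.eq_empty_or_nonempty with rfl | ⟨x₀, hx₀⟩
  · simp
  have hr : 0 ≤ r := dist_nonneg.trans (hs x₀ hx₀ x₀ hx₀)
  have hsub : closure (G '' s) ⊆ closedBall (G x₀) (K * r) :=
    closure_minimal (image_subset_iff.2 fun x hx =>
      (hG.dist_le_mul x hx x₀ hx₀).trans (mul_le_mul_of_nonneg_left (hs x hx x₀ hx₀) K.2))
      isClosed_closedBall
  exact (measure_mono hsub).trans_eq (μ.addHaar_closedBall _ (by positivity))

theorem ae_finite_inter_preimage_of_lipschitzOnWith_of_subset_Icc {ι : Type*} [Fintype ι]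
    (hdim : Fintype.card ι ≤ finrank ℝ E) {G : (ι → ℝ) → E} {K : ℝ≥0}
    {s : Set (ι → ℝ)} (hG : LipschitzOnWith K G s) (hs : s ⊆ Icc 0 1) :
    ∀ᵐ y ∂μ, (s ∩ G ⁻¹' {y}).Finite := by
  classical
  refine ae_finite_inter_preimage_of_cover (D := gridCube)
    (S := fun k c => closure (G '' (s ∩ gridCube k c)))
    (C := ENNReal.ofReal (K ^ finrank ℝ E) * μ (ball 0 1)) tendsto_one_div_add_atTop_nhds_zero_nat
    (fun k => hs.trans (Icc_zero_one_subset_iUnion_gridCube k))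
    (fun k c _ hu _ hv => dist_le_of_mem_gridCube hu hv)
    (fun k c => (mapsTo_image _ _).mono_right subset_closure)
    (fun k c => isClosed_closure.measurableSet) (fun k => ?_) (by finiteness)
  have hk : (1 : ℝ) ≤ k + 1 := by linarith [k.cast_nonneg (α := ℝ)]
  calc ∑ c, μ (closure (G '' (s ∩ gridCube k c)))
      ≤ ∑ _c : ι → Fin (k + 1), ENNReal.ofReal ((K * (1 / (k + 1))) ^ finrank ℝ E) * μ (ball 0 1) :=
        Finset.sum_le_sum fun c _ => measure_closure_image_le_of_lipschitzOnWith μ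
          (hG.mono inter_subset_left) fun u hu v hv => dist_le_of_mem_gridCube hu.2 hv.2
    _ = ENNReal.ofReal (((k : ℝ) + 1) ^ Fintype.card ι * (K / (k + 1)) ^ finrank ℝ E) *
          μ (ball 0 1) := by
        rw [Finset.sum_const, Finset.card_univ, Fintype.card_fun, Fintype.card_fin, nsmul_eq_mul,
          ← mul_assoc, ENNReal.ofReal_mul (by positivity), mul_one_div]
        norm_cast
    _ ≤ ENNReal.ofReal (K ^ finrank ℝ E) * μ (ball 0 1) := by
        gcongr
        exact pow_mul_div_pow_le hdim K.2 hk

theorem ae_finite_inter_preimage_of_lipschitzOnWith {F : Type*} [NormedAddCommGroup F]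
    [NormedSpace ℝ F] [FiniteDimensional ℝ F] (hdim : finrank ℝ F ≤ finrank ℝ E) {G : F → E}
    {K : ℝ≥0} {s : Set F} (hG : LipschitzOnWith K G s) (hs : IsBounded s) :
    ∀ᵐ y ∂μ, (s ∩ G ⁻¹' {y}).Finite := by
  obtain ⟨ψ, L, hψ, hsψ⟩ := exists_lipschitzWith_subset_image_Icc hs
  have hGψ : LipschitzOnWith (K * L) (G ∘ ψ) (Icc 0 1 ∩ ψ ⁻¹' s) :=
    hG.comp hψ.lipschitzOnWith fun u hu => hu.2
  filter_upwards [ae_finite_inter_preimage_of_lipschitzOnWith_of_subset_Icc μ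
    (by simpa using hdim) hGψ inter_subset_left] with y hy
  refine (hy.image ψ).subset ?_
  rintro x ⟨hxs, hxy⟩
  obtain ⟨u, hu, rfl⟩ := hsψ hxs
  exact ⟨u, ⟨⟨hu, hxs⟩, hxy⟩, rfl⟩

end LipschitzFibers

section Hausdorff

variable {X : Type*} [MetricSpace X] [MeasurableSpace X] [BorelSpace X]

theorem IsPreconnected.edist_le_hausdorffMeasure_one {s : Set X} (hs : IsPreconnected s)
    {a b : X} (ha : a ∈ s) (hb : b ∈ s) : edist a b ≤ μH[1] s := by
  have hIcc : Icc 0 (dist a b) ⊆ dist a '' s :=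
    (hs.image _ (LipschitzWith.dist_right a).continuous.continuousOn).Icc_subset
      ⟨a, ha, dist_self a⟩ ⟨b, hb, rfl⟩
  calc edist a b = volume (Icc 0 (dist a b)) := by rw [Real.volume_Icc, sub_zero, edist_dist]
    _ = μH[1] (Icc 0 (dist a b)) := by rw [hausdorffMeasure_real]
    _ ≤ μH[1] (dist a '' s) := measure_mono hIcc
    _ ≤ μH[1] s := by
      simpa using (LipschitzWith.dist_right a).hausdorffMeasure_image_le zero_le_one s

theorem eVariationOn_le_hausdorffMeasure_image {Γ : ℝ → X} {s : Set ℝ} (hs : s.OrdConnected)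
    (hc : ContinuousOn Γ s) (hinj : InjOn Γ s) : eVariationOn Γ s ≤ μH[1] (Γ '' s) := by
  have := Measure.nullSingletonClass_hausdorff X one_pos
  refine iSup_le fun ⟨n, u, hu, us⟩ => ?_
  set A : ℕ → Set X := fun i => Γ '' Icc (u i) (u (i + 1))
  have hsub : ∀ i, Icc (u i) (u (i + 1)) ⊆ s := fun i => hs.out (us i) (us (i + 1))
  have hdisj : (Finset.range n : Set ℕ).Pairwise (Function.onFun (AEDisjoint μH[1]) A) := by
    intro i hi j hj hij
    wlog hlt : i < j generalizing i j
    · exact AEDisjoint.symm (this hj hi hij.symm (by omega))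
    show μH[1] (A i ∩ A j) = 0
    rw [← hinj.image_inter (hsub i) (hsub j), Icc_inter_Icc]
    refine ((subsingleton_Icc_of_ge ?_).image Γ).measure_zero _
    exact (min_le_left _ _).trans ((hu (by omega : i + 1 ≤ j)).trans (le_max_right _ _))
  calc ∑ i ∈ Finset.range n, edist (Γ (u (i + 1))) (Γ (u i))
      ≤ ∑ i ∈ Finset.range n, μH[1] (A i) := Finset.sum_le_sum fun i _ =>
        (isPreconnected_Icc.image Γ (hc.mono (hsub i))).edist_le_hausdorffMeasure_one
          (mem_image_of_mem Γ (right_mem_Icc.2 (hu i.le_succ)))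
          (mem_image_of_mem Γ (left_mem_Icc.2 (hu i.le_succ)))
    _ = μH[1] (⋃ i ∈ Finset.range n, A i) := (measure_biUnion_finset₀ hdisj fun i _ =>
        (isCompact_Icc.image_of_continuousOn (hc.mono (hsub i))).measurableSet
          |>.nullMeasurableSet).symm
    _ ≤ μH[1] (Γ '' s) := measure_mono (iUnion₂_subset fun i _ => image_mono (hsub i))

end Hausdorff

theorem HasConstantSpeedOnWith.lipschitzOnWith {E : Type*} [PseudoEMetricSpace E] {f : ℝ → E}
    {s : Set ℝ} {l : ℝ≥0} (h : HasConstantSpeedOnWith f s l) : LipschitzOnWith l f s := by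
  intro x hx y hy
  wlog hxy : x ≤ y generalizing x y
  · rw [edist_comm, edist_comm x]
    exact this hy hx (le_of_not_ge hxy)
  calc edist (f x) (f y) ≤ eVariationOn f (s ∩ Icc x y) :=
        eVariationOn.edist_le f ⟨hx, le_rfl, hxy⟩ ⟨hy, hxy, le_rfl⟩
    _ = l * edist x y := by
      rw [h hx hy, ENNReal.ofReal_mul (by positivity), ENNReal.ofReal_coe_nnreal, edist_dist,
        Real.dist_eq, abs_sub_comm, abs_of_nonneg (sub_nonneg.2 hxy)]

theorem IsRectifiableCurve.exists_lipschitzOnWith {γ : Set ℂ} (hγ : IsRectifiableCurve γ) :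
    ∃ (g : ℝ → ℂ) (T : Set ℝ), IsBounded T ∧ LipschitzOnWith 1 g T ∧ g '' T = γ := by
  obtain ⟨Γ, hc, hinj, rfl, hfin⟩ := hγ
  have hBV : BoundedVariationOn Γ (Icc 0 1) := ne_top_of_le_ne_top hfin.ne
    (eVariationOn_le_hausdorffMeasure_image ordConnected_Icc hc hinj)
  have h0 : (0 : ℝ) ∈ Icc (0 : ℝ) 1 := left_mem_Icc.2 zero_le_one
  have hmono := variationOnFromTo.monotoneOn hBV.locallyBoundedVariationOn h0
  refine ⟨naturalParameterization Γ (Icc 0 1) 0, variationOnFromTo Γ (Icc 0 1) 0 '' Icc 0 1,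
    isBounded_Icc _ _ |>.subset hmono.image_Icc_subset,
    (has_unit_speed_naturalParameterization Γ hBV.locallyBoundedVariationOn h0).lipschitzOnWith,
    ?_⟩
  rw [image_image]
  exact image_congr fun b hb => edist_eq_zero.1
    (edist_naturalParameterization_eq_zero hBV.locallyBoundedVariationOn h0 hb)

theorem LipschitzOnWith.isBounded_image {α β : Type*} [PseudoMetricSpace α] [PseudoMetricSpace β]
    {f : α → β} {K : ℝ≥0} {s : Set α} (hf : LipschitzOnWith K f s) (hs : IsBounded s) :
    IsBounded (f '' s) := by
  obtain ⟨C, hC⟩ := isBounded_iff.1 hs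
  exact isBounded_iff.2 ⟨K * C, forall_mem_image.2 fun x hx => forall_mem_image.2 fun y hy =>
    (hf.dist_le_mul x hx y hy).trans (mul_le_mul_of_nonneg_left (hC hx hy) K.2)⟩

theorem norm_exp_ofReal_mul_I_sub_exp_ofReal_mul_I_le (θ θ' : ℝ) :
    ‖exp (θ * I) - exp (θ' * I)‖ ≤ dist θ θ' := by
  have : exp (θ * I) - exp (θ' * I) = exp (θ' * I) * (exp (I * ↑(θ - θ')) - 1) := by
    rw [mul_sub, ← Complex.exp_add]; push_cast; ring_nf
  rw [this, norm_mul, norm_exp_ofReal_mul_I, one_mul, Real.dist_eq, ← Real.norm_eq_abs]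
  exact Real.norm_exp_I_mul_ofReal_sub_one_le

theorem LipschitzOnWith.exp_mul_I_mul {h : ℝ → ℂ} {K M : ℝ≥0} {T : Set ℝ}
    (hh : LipschitzOnWith K h T) (hM : ∀ t ∈ T, ‖h t‖ ≤ M) :
    LipschitzOnWith (K + M) (fun p : ℝ × ℝ => exp (p.2 * I) * h p.1) (T ×ˢ univ) := by
  refine LipschitzOnWith.of_dist_le_mul fun p hp q hq => ?_
  calc dist (exp (p.2 * I) * h p.1) (exp (q.2 * I) * h q.1)
      = ‖exp (p.2 * I) * (h p.1 - h q.1) + (exp (p.2 * I) - exp (q.2 * I)) * h q.1‖ := by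
        rw [dist_eq_norm]; ring_nf
    _ ≤ K * dist p.1 q.1 + dist p.2 q.2 * M := by
        refine (norm_add_le _ _).trans (add_le_add ?_ ?_)
        · rw [norm_mul, norm_exp_ofReal_mul_I, one_mul, ← dist_eq_norm]
          exact hh.dist_le_mul _ hp.1 _ hq.1
        · rw [norm_mul]
          exact mul_le_mul (norm_exp_ofReal_mul_I_sub_exp_ofReal_mul_I_le _ _) (hM _ hq.1)
            (norm_nonneg _) dist_nonneg
    _ ≤ (K + M) * dist p q := by
        rw [Prod.dist_eq, add_mul, mul_comm _ (M : ℝ)]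
        gcongr
        exacts [le_max_left _ _, le_max_right _ _]

def relativePosition (g g' : ℝ → ℂ) (q : ℝ × ℝ × ℝ) : ℂ × ℝ :=
  (g q.1 - exp (q.2.2 * I) * g' q.2.1, q.2.2)

theorem lipschitzOnWith_relativePosition {g g' : ℝ → ℂ} {K K' M : ℝ≥0} {T T' : Set ℝ}
    (hg : LipschitzOnWith K g T) (hg' : LipschitzOnWith K' g' T') (hM : ∀ t ∈ T', ‖g' t‖ ≤ M)
    (Θ : Set ℝ) :
    LipschitzOnWith (max (K + (K' + M)) 1) (relativePosition g g') (T ×ˢ T' ×ˢ Θ) := by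
  have h₁ : LipschitzOnWith K (fun q : ℝ × ℝ × ℝ => g q.1) (T ×ˢ T' ×ˢ Θ) := by
    simpa only [mul_one, Function.comp_def] using
      hg.comp LipschitzWith.prod_fst.lipschitzOnWith fun q (hq : q ∈ T ×ˢ T' ×ˢ Θ) => hq.1
  have h₂ : LipschitzOnWith (K' + M) (fun q : ℝ × ℝ × ℝ => exp (q.2.2 * I) * g' q.2.1)
      (T ×ˢ T' ×ˢ Θ) := by
    simpa only [mul_one, Function.comp_def] using
      (hg'.exp_mul_I_mul hM).comp LipschitzWith.prod_snd.lipschitzOnWith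
        fun q (hq : q ∈ T ×ˢ T' ×ˢ Θ) => ⟨hq.2.1, mem_univ _⟩
  have h₃ : LipschitzWith 1 (fun q : ℝ × ℝ × ℝ => q.2.2) := by
    simpa only [mul_one, Function.comp_def] using
      LipschitzWith.prod_snd.comp LipschitzWith.prod_snd
  exact (h₁.sub h₂).prodMk h₃.lipschitzOnWith

theorem inter_subset_image_fiber_relativePosition {g g' : ℝ → ℂ} {T T' Θ : Set ℝ} {x : ℂ}
    {θ : ℝ} (hθ : θ ∈ Θ) :
    g '' T ∩ (fun a => exp (θ * I) * a + x) '' (g' '' T') ⊆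
      (fun q => g q.1) '' (T ×ˢ T' ×ˢ Θ ∩ relativePosition g g' ⁻¹' {(x, θ)}) := by
  rintro _ ⟨⟨s, hs, rfl⟩, _, ⟨t, ht, rfl⟩, hst⟩
  refine ⟨(s, t, θ), ⟨⟨hs, ht, hθ⟩, Prod.ext ?_ rfl⟩, rfl⟩
  simp only [relativePosition, ← hst]
  ring

/-- `ℝ²` is modelled as `ℂ`, so the rotation `ρ_θ` is multiplication by `exp(θ i)`. -/
theorem ae_finite_intersection (γ γ' : Set ℂ)
    (hγ : IsRectifiableCurve γ) (hγ' : IsRectifiableCurve γ') :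
    ∀ᵐ p : ℂ × ℝ
        ∂((volume : Measure ℂ).prod
            ((volume : Measure ℝ).restrict (Set.Ioc (-Real.pi) Real.pi))),
      (γ ∩ ((fun a : ℂ => Complex.exp (p.2 * Complex.I) * a + p.1) '' γ')).Finite := by
  obtain ⟨g, T, hT, hg, rfl⟩ := hγ.exists_lipschitzOnWith
  obtain ⟨g', T', hT', hg', rfl⟩ := hγ'.exists_lipschitzOnWith
  obtain ⟨M, hM, hg'M⟩ := (hg'.isBounded_image hT').exists_pos_norm_le
  lift M to ℝ≥0 using hM.le
  have hG := lipschitzOnWith_relativePosition hg hg' (forall_mem_image.1 hg'M)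
    (Icc (-Real.pi) Real.pi)
  have hfin := ae_finite_inter_preimage_of_lipschitzOnWith ((volume : Measure ℂ).prod volume)
    (by simp) hG (hT.prod (hT'.prod (isBounded_Icc _ _)))
  rw [← Measure.restrict_univ (μ := (volume : Measure ℂ)), Measure.prod_restrict,
    ae_restrict_iff' (MeasurableSet.univ.prod measurableSet_Ioc)]
  filter_upwards [hfin] with ⟨x, θ⟩ hx hθ
  exact (hx.image _).subset (inter_subset_image_fiber_relativePosition (Ioc_subset_Icc_self hθ.2))
end
end

section
/- Connectedness of the frontier of an open plane set with connected complement (the unicoherence argument used in the proofs of Lemma 7.9 and Theorem 3.3): Let U ⊆ ℝ² be an open set such that U is preconnected and ℝ² \ U is preconnected. Then the topological frontier ∂U = closure(U) \ U is preconnected. (This follows because closure(U) and ℝ² \ U are closed connected sets whose union is ℝ², so by the unicoherence of ℝ² their intersection, which equals ∂U, is connected.) -/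
/-!
Unicoherence via lifting to the universal cover of the circle. Suppose `closure U ∩ Uᶜ` splits
into disjoint nonempty closed pieces `P ∋ p` and `Q ∋ q`, and take a Urysohn function `φ` with
`φ = 0` on `P` and `φ = 1` on `Q`. The circle-valued map equal to `exp (iπφ)` on `closure U` and
to `exp (-iπφ)` on `Uᶜ` is continuous, because the two formulas agree where `φ ∈ {0, 1}`. The
plane is simply connected, so the map lifts to `exp (iF)` with `F` real and continuous. On each of
the two connected closed sets, `F ∓ πφ` is a continuous lift of a constant, hence constant; at `p`
and `q` this gives both `F q - F p = π` and `F q - F p = -π`.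
-/

open Set Real

theorem Continuous.piecewise_of_isClosed {X Y : Type*} [TopologicalSpace X] [TopologicalSpace Y]
    {A B : Set X} [∀ x, Decidable (x ∈ A)] (hA : IsClosed A) (hB : IsClosed B)
    (hAB : A ∪ B = univ) {f g : X → Y} (hf : Continuous f) (hg : Continuous g)
    (hfg : EqOn f g (A ∩ B)) : Continuous (A.piecewise f g) := by
  refine hf.piecewise (fun x hx ↦ hfg ⟨hA.frontier_subset hx, ?_⟩) hg
  have hAcB : Aᶜ ⊆ B := fun y hy ↦ (hAB.ge (mem_univ y)).resolve_left hy
  exact closure_minimal hAcB hB (frontier_eq_closure_inter_closure.subset hx).2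

theorem Circle.exp_pi_mul_intCast_eq_exp_neg (n : ℤ) :
    Circle.exp (π * n) = Circle.exp (-(π * n)) :=
  Circle.exp_eq_exp.2 ⟨n, by ring⟩

theorem exists_continuous_circleExp_lift {X : Type*} [TopologicalSpace X]
    [SimplyConnectedSpace X] [LocallyPathConnectedSpace X] (f : C(X, Circle)) :
    ∃ F : C(X, ℝ), ∀ x, Circle.exp (F x) = f x := by
  obtain ⟨x₀⟩ := (inferInstance : Nonempty X)
  obtain ⟨e₀, he₀⟩ := Circle.exp_surjective (f x₀)
  obtain ⟨F, -, hF⟩ :=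
    (Circle.isCoveringMap_exp.existsUnique_continuousMap_lifts f x₀ e₀ he₀).exists
  exact ⟨F, congrFun hF⟩

theorem IsPreconnected.sub_eq_sub_of_circleExp_eq {X : Type*} [TopologicalSpace X]
    {s : Set X} (hs : IsPreconnected s) {F G : X → ℝ} (hF : ContinuousOn F s)
    (hG : ContinuousOn G s) (h : ∀ x ∈ s, Circle.exp (F x) = Circle.exp (G x)) {a b : X}
    (ha : a ∈ s) (hb : b ∈ s) : F a - G a = F b - G b := by
  refine Circle.isCoveringMap_exp.constOn_of_comp hs (hF.sub hG) (fun x hx y hy ↦ ?_) ha hb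
  simp [h x hx, h y hy]

/-- Simply connected, locally path-connected normal spaces are unicoherent. -/
theorem IsPreconnected.inter_of_isClosed_of_union_eq_univ {X : Type*} [TopologicalSpace X]
    [NormalSpace X] [SimplyConnectedSpace X] [LocallyPathConnectedSpace X] {A B : Set X}
    (hA : IsPreconnected A) (hB : IsPreconnected B) (hAc : IsClosed A) (hBc : IsClosed B)
    (hAB : A ∪ B = univ) : IsPreconnected (A ∩ B) := by
  classical
  rw [isPreconnected_iff_subset_of_fully_disjoint_closed (hAc.inter hBc)]
  intro u v hu hv huv hdisj
  by_contra! h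
  obtain ⟨p, hp, hpu⟩ := not_subset.1 h.1
  obtain ⟨q, hq, hqv⟩ := not_subset.1 h.2
  obtain ⟨φ, hφv, hφu, -⟩ := exists_continuous_zero_one_of_isClosed hv hu hdisj.symm
  have hφp : φ p = 0 := hφv ((huv hp).resolve_left hpu)
  have hφq : φ q = 1 := hφu ((huv hq).resolve_right hqv)
  let G : X → ℝ := fun x ↦ π * φ x
  have hG : Continuous G := by fun_prop
  have hagree : EqOn (fun x ↦ Circle.exp (G x)) (fun x ↦ Circle.exp (-G x)) (A ∩ B) := by
    intro x hx
    rcases huv hx with hxu | hxv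
    · simpa [G, hφu hxu] using Circle.exp_pi_mul_intCast_eq_exp_neg 1
    · simp [G, hφv hxv]
  have hf : Continuous (A.piecewise (fun x ↦ Circle.exp (G x)) (fun x ↦ Circle.exp (-G x))) :=
    .piecewise_of_isClosed hAc hBc hAB (by fun_prop) (by fun_prop) hagree
  obtain ⟨F, hF⟩ := exists_continuous_circleExp_lift ⟨_, hf⟩
  have hFA : F p - G p = F q - G q := by
    refine hA.sub_eq_sub_of_circleExp_eq F.continuous.continuousOn hG.continuousOn
      (fun x hx ↦ ?_) hp.1 hq.1
    simpa [hx] using hF x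
  have hFB : F p - -G p = F q - -G q := by
    refine hB.sub_eq_sub_of_circleExp_eq F.continuous.continuousOn hG.neg.continuousOn
      (fun x hx ↦ ?_) hp.2 hq.2
    rw [hF x, ContinuousMap.coe_mk]
    by_cases hxA : x ∈ A
    · rw [piecewise_eq_of_mem _ _ _ hxA]
      exact hagree ⟨hxA, hx⟩
    · rw [piecewise_eq_of_notMem _ _ _ hxA]
      rfl
  simp only [G, hφp, hφq] at hFA hFB
  linarith [pi_pos]

/-- Unicoherence of the plane: if `U` is an open subset of `ℝ²` such that both
`U` and its complement are preconnected, then the topological frontier of `U`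
is preconnected. -/
theorem frontier_preconnected_of_open (U : Set (EuclideanSpace ℝ (Fin 2)))
    (hU : IsOpen U) (hconn : IsPreconnected U) (hconn' : IsPreconnected Uᶜ) :
    IsPreconnected (frontier U) := by
  rw [hU.frontier_eq, sdiff_eq]
  exact hconn.closure.inter_of_isClosed_of_union_eq_univ hconn' isClosed_closure
    hU.isClosed_compl
    (univ_subset_iff.1 (union_compl_self U ▸ union_subset_union_left Uᶜ subset_closure))
end

section
/- Expected reciprocal of the exposed interval length (the identity E[X^{−1}] = 2/λ asserted between Propositions 2.5 and 2.6, deduced from the distribution (Xdist)): Let ν be a probability measure on (0,∞) with mean λ := ∫_{(0,∞)} u ν(du) satisfying 0 < λ < ∞. Then ∫_0^∞ ( ∫_{(x,∞)} ( 2(λ+u) / (λ+x)³ ) ν(du) ) dx + ∫_{(0,∞)} ( 1 / (x+λ) ) ν(dx) = 2/λ. (The left-hand side is ∫ x^{−1} P[X ∈ dx] where P[X ∈ dx] = ( ∫_{(x,∞)} 2x(λ+u)/(λ+x)³ ν(du) ) dx + (x/(x+λ)) ν(dx) is the distribution of the length X of the visible interval covering the origin in the one-dimensional dead leaves model with leaf-length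 distribution ν.) -/
open MeasureTheory Set

noncomputable section

/-!
By Tonelli, the double integral equals `∫ (∫_0^u 2(λ+u)/(λ+x)³ dx) ν(du)`, and the
inner integral is `(λ+u)(1/λ² - 1/(λ+u)²)`. Adding `1/(λ+u)` leaves `(λ+u)/λ²`, whose
`ν`-integral is `(λ+λ)/λ² = 2/λ`.
-/

open scoped ENNReal

theorem lintegral_lintegral_Ioi_swap {α : Type*} [TopologicalSpace α] [LinearOrder α]
    [OrderClosedTopology α] [SecondCountableTopology α] [MeasurableSpace α]
    [OpensMeasurableSpace α] (μ ν : Measure α) [SFinite μ] [SFinite ν]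
    (f : α → α → ℝ≥0∞) (hf : Measurable (Function.uncurry f)) :
    ∫⁻ x, ∫⁻ u in Ioi x, f x u ∂ν ∂μ = ∫⁻ u, ∫⁻ x in Iio u, f x u ∂μ ∂ν := by
  let g : α × α → ℝ≥0∞ := {p | p.1 < p.2}.indicator (Function.uncurry f)
  have hg : Measurable g := hf.indicator (measurableSet_lt measurable_fst measurable_snd)
  calc ∫⁻ x, ∫⁻ u in Ioi x, f x u ∂ν ∂μ = ∫⁻ x, ∫⁻ u, g (x, u) ∂ν ∂μ := by
        refine lintegral_congr fun x => ?_
        rw [← lintegral_indicator measurableSet_Ioi]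
        rfl
    _ = ∫⁻ u, ∫⁻ x, g (x, u) ∂μ ∂ν := lintegral_lintegral_swap hg.aemeasurable
    _ = ∫⁻ u, ∫⁻ x in Iio u, f x u ∂μ ∂ν := by
        refine lintegral_congr fun u => ?_
        rw [← lintegral_indicator measurableSet_Iio]
        rfl

theorem integral_two_div_add_pow_three {a u : ℝ} (ha : 0 < a) (hu : 0 ≤ u) :
    ∫ x in (0 : ℝ)..u, 2 / (a + x) ^ 3 = 1 / a ^ 2 - 1 / (a + u) ^ 2 := by
  have hax : ∀ x ∈ uIcc 0 u, 0 < a + x := fun x hx => by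
    rw [uIcc_of_le hu] at hx
    linarith [hx.1]
  have hderiv : ∀ x ∈ uIcc 0 u, HasDerivAt (fun x => -((a + x) ^ 2)⁻¹) (2 / (a + x) ^ 3) x := by
    intro x hx
    have hx0 := (hax x hx).ne'
    refine ((((hasDerivAt_id x).const_add a).pow 2).inv (pow_ne_zero 2 hx0)).neg.congr_deriv ?_
    simp only [Pi.pow_apply, id]
    field_simp
    ring
  have hcont : ContinuousOn (fun x => 2 / (a + x) ^ 3) (uIcc 0 u) :=
    continuousOn_const.div (by fun_prop) fun x hx => (pow_pos (hax x hx) 3).ne'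
  rw [intervalIntegral.integral_eq_sub_of_hasDerivAt hderiv hcont.intervalIntegrable]
  simp only [add_zero]
  ring

theorem lintegral_Ioo_exposed_density_add {a u : ℝ} (ha : 0 < a) (hu : 0 ≤ u) :
    (∫⁻ x in Ioo 0 u, ENNReal.ofReal (2 * (a + u) / (a + x) ^ 3)) + ENNReal.ofReal (1 / (u + a)) =
      ENNReal.ofReal ((a + u) / a ^ 2) := by
  have hax : ∀ x ∈ Icc 0 u, 0 < a + x := fun x hx => by linarith [hx.1]
  have hint : IntegrableOn (fun x => 2 * (a + u) / (a + x) ^ 3) (Ioo 0 u) := by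
    refine (ContinuousOn.integrableOn_Icc ?_).mono_set Ioo_subset_Icc_self
    exact continuousOn_const.div (by fun_prop) fun x hx => (pow_pos (hax x hx) 3).ne'
  have hnonneg : 0 ≤ᵐ[volume.restrict (Ioo 0 u)] fun x => 2 * (a + u) / (a + x) ^ 3 := by
    filter_upwards [ae_restrict_mem measurableSet_Ioo] with x hx
    have := hax x (Ioo_subset_Icc_self hx)
    positivity
  have hvalue : ∫ x in Ioo 0 u, 2 * (a + u) / (a + x) ^ 3 =
      (a + u) * (1 / a ^ 2 - 1 / (a + u) ^ 2) := by
    simp_rw [mul_comm 2 (a + u), mul_div_assoc]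
    rw [integral_const_mul, ← integral_Ioc_eq_integral_Ioo, ← intervalIntegral.integral_of_le hu,
      integral_two_div_add_pow_three ha hu]
  have hvalue_nonneg : 0 ≤ (a + u) * (1 / a ^ 2 - 1 / (a + u) ^ 2) := by
    have : 1 / (a + u) ^ 2 ≤ 1 / a ^ 2 := by gcongr; linarith
    nlinarith
  rw [← ofReal_integral_eq_lintegral_ofReal hint hnonneg, hvalue,
    ← ENNReal.ofReal_add hvalue_nonneg (by positivity)]
  congr 1
  field_simp
  ring

/-- Expected reciprocal of the exposed interval length in the one-dimensional
dead leaves model: if `ν` is a probability measure on `(0,∞)` with finite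
positive mean `λ`, then
`∫_0^∞ ( ∫_{(x,∞)} 2(λ+u)/(λ+x)³ ν(du) ) dx + ∫_{(0,∞)} 1/(x+λ) ν(dx) = 2/λ`,
i.e. `E[X⁻¹] = 2/λ` where `X` has the exposed-interval-length distribution. -/
theorem expected_reciprocal_exposed_length (ν : Measure ℝ) [IsProbabilityMeasure ν]
    (hsupp : ν (Set.Iic 0) = 0) (hInt : Integrable (fun u : ℝ => u) ν)
    (lam : ℝ) (hlam : lam = ∫ u, u ∂ν) (hpos : 0 < lam) :
    (∫⁻ x in Set.Ioi (0 : ℝ),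
        ∫⁻ u in Set.Ioi x, ENNReal.ofReal (2 * (lam + u) / (lam + x) ^ 3) ∂ν)
      + (∫⁻ x in Set.Ioi (0 : ℝ), ENNReal.ofReal (1 / (x + lam)) ∂ν)
      = ENNReal.ofReal (2 / lam) := by
  have hν_pos : ∀ᵐ u ∂ν, 0 < u := by
    rw [ae_iff]
    simp only [not_lt]
    exact hsupp
  have hν_restrict : ν.restrict (Ioi 0) = ν := Measure.restrict_eq_self_of_ae_mem hν_pos
  have hmeas : Measurable (Function.uncurry fun x u : ℝ =>
      ENNReal.ofReal (2 * (lam + u) / (lam + x) ^ 3)) := by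
    fun_prop
  have hint : Integrable (fun u => (lam + u) / lam ^ 2) ν :=
    ((integrable_const lam).add hInt).div_const _
  have hmean : ∫ u, (lam + u) / lam ^ 2 ∂ν = 2 / lam := by
    rw [integral_div, integral_add (integrable_const lam) hInt, integral_const, ← hlam]
    simp only [probReal_univ, one_smul]
    field_simp
    ring
  calc _ = (∫⁻ u, (∫⁻ x in Ioo 0 u, ENNReal.ofReal (2 * (lam + u) / (lam + x) ^ 3)) ∂ν)
          + ∫⁻ u, ENNReal.ofReal (1 / (u + lam)) ∂ν := by
        rw [lintegral_lintegral_Ioi_swap _ _ _ hmeas, hν_restrict]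
        simp only [Measure.restrict_restrict measurableSet_Iio, Iio_inter_Ioi]
    _ = ∫⁻ u, ENNReal.ofReal ((lam + u) / lam ^ 2) ∂ν := by
        rw [← lintegral_add_right _ (by fun_prop)]
        exact lintegral_congr_ae
          (hν_pos.mono fun u hu => lintegral_Ioo_exposed_density_add hpos hu.le)
    _ = ENNReal.ofReal (2 / lam) := by
        rw [← ofReal_integral_eq_lintegral_ofReal hint (hν_pos.mono fun u hu => by positivity),
          hmean]
end
end
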